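/- A filter space X_p is weakly p-orderable if and only if there exists a nested subfamily 𝒫 of the filter p with ⋂𝒫 = ∅. -/

import Mathlib

open Set

universe u v w y

/-- The filter space topology on `Option X`: every point `some x` is isolated, and the
neighborhoods of the extra point `none` are the sets `P ∪ {none}` with `P ∈ p`. -/
def filterTop {X : Type u} (p : Filter X) : TopologicalSpace (Option X) where
  IsOpen U := none ∈ U → (Option.some ⁻¹' U) ∈ p
  isOpen_univ := fun _ => by simp
  isOpen_inter := fun U V hU hV h => by
    rw [Set.preimage_inter]
    exact Filter.inter_mem (hU h.1) (hV h.2)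
  isOpen_sUnion := fun S hS h => by
    rw [Set.mem_sUnion] at h
    obtain ⟨U, hUS, hU⟩ := h
    exact Filter.mem_of_superset (hS U hUS hU)
      (Set.preimage_mono (Set.subset_sUnion_of_mem hUS))

/-- A filter is free if `∅ ∉ p` and the intersection of all its members is empty. -/
def IsFree {X : Type u} (p : Filter X) : Prop :=
  (∅ : Set X) ∉ p ∧ ⋂₀ {P : Set X | P ∈ p} = ∅

/-- A family of sets is nested if any two members are comparable under inclusion. -/
def Nested {X : Type u} (F : Set (Set X)) : Prop :=
  ∀ P ∈ F, ∀ Q ∈ F, P ⊆ Q ∨ Q ⊆ P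

/-- The order topology of a linear order: generated by the open rays. -/
def ordTop {Z : Type u} (r : LinearOrder Z) : TopologicalSpace Z :=
  TopologicalSpace.generateFrom
    {S : Set Z | ∃ a : Z, S = {z | r.lt z a} ∨ S = {z | r.lt a z}}

/-- `(Z, t)` is weakly orderable by the linear order `r`: the order topology of `r`
is contained in `t`. -/
def WOBy {Z : Type u} (t : TopologicalSpace Z) (r : LinearOrder Z) : Prop :=
  ∀ S : Set Z, (ordTop r).IsOpen S → t.IsOpen S

def WeaklyOrderable {Z : Type u} (t : TopologicalSpace Z) : Prop :=
  ∃ r : LinearOrder Z, WOBy t r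

/-- Weakly `p`-orderable: weakly orderable by a linear order in which `p` is the maximum. -/
def WeaklyPOrderable {Z : Type u} (t : TopologicalSpace Z) (p : Z) : Prop :=
  ∃ r : LinearOrder Z, WOBy t r ∧ ∀ z : Z, r.le z p

def Orderable {Z : Type u} (t : TopologicalSpace Z) : Prop :=
  ∃ r : LinearOrder Z, ordTop r = t

/-- `p`-orderable: orderable by a linear order in which `p` is the maximum. -/
def POrderable {Z : Type u} (t : TopologicalSpace Z) (p : Z) : Prop :=
  ∃ r : LinearOrder Z, ordTop r = t ∧ ∀ z : Z, r.le z p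

/-- The approaching number of a point `p`: the least cardinality of a set
`A ⊆ Z \ {p}` with `p ∈ closure A`. -/
noncomputable def aNum {Z : Type u} (t : TopologicalSpace Z) (p : Z) : Cardinal.{u} :=
  sInf {c : Cardinal.{u} | ∃ A : Set Z, p ∉ A ∧ p ∈ @closure Z t A ∧ c = Cardinal.mk ↥A}

/-- The pseudo-character of a point `p`: the least cardinality of a family of open sets
whose intersection is `{p}`. -/
noncomputable def psiNum {Z : Type u} (t : TopologicalSpace Z) (p : Z) : Cardinal.{u} :=
  sInf {c : Cardinal.{u} | ∃ Us : Set (Set Z),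
    (∀ V ∈ Us, t.IsOpen V) ∧ ⋂₀ Us = {p} ∧ c = Cardinal.mk ↥Us}

/-- The approaching number of a space: minimum over non-isolated points. -/
noncomputable def aSp {Z : Type u} (t : TopologicalSpace Z) : Cardinal.{u} :=
  sInf {c : Cardinal.{u} | ∃ p : Z, ¬ t.IsOpen ({p} : Set Z) ∧ c = aNum t p}

/-- The pseudo-character of a space: supremum over points. -/
noncomputable def psiSp {Z : Type u} (t : TopologicalSpace Z) : Cardinal.{u} :=
  ⨆ p : Z, psiNum t p

/-- `‖p‖ = min {|P| : P ∈ p}`. -/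
noncomputable def fNorm {X : Type u} (p : Filter X) : Cardinal.{u} :=
  sInf {c : Cardinal.{u} | ∃ P ∈ p, c = Cardinal.mk ↥P}

/-- A selection relation: total and antisymmetric. -/
def SelRel {Z : Type u} (R : Z → Z → Prop) : Prop :=
  (∀ x y : Z, R x y ∨ R y x) ∧ (∀ x y : Z, R x y → R y x → x = y)

/-- Separate continuity of a selection relation: the open rays are open. -/
def SepCont {Z : Type u} (t : TopologicalSpace Z) (R : Z → Z → Prop) : Prop :=
  ∀ x : Z, t.IsOpen {z | R z x ∧ z ≠ x} ∧ t.IsOpen {z | R x z ∧ x ≠ z}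

/-- Continuity of a selection relation (Gutev–Nogura characterization). -/
def ContSel {Z : Type u} (t : TopologicalSpace Z) (R : Z → Z → Prop) : Prop :=
  ∀ x y : Z, R x y → x ≠ y →
    ∃ U V : Set Z, t.IsOpen U ∧ t.IsOpen V ∧ x ∈ U ∧ y ∈ V ∧
      ∀ u ∈ U, ∀ v ∈ V, R u v ∧ u ≠ v

/-- The subspace topology. -/
def subTop {Z : Type u} (t : TopologicalSpace Z) (S : Set Z) : TopologicalSpace ↥S :=
  TopologicalSpace.induced Subtype.val t

/-- The product topology. -/
def prodTop {A : Type u} {B : Type v} (tA : TopologicalSpace A) (tB : TopologicalSpace B) :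
    TopologicalSpace (A × B) :=
  TopologicalSpace.induced Prod.fst tA ⊓ TopologicalSpace.induced Prod.snd tB

/-- `C` is a club (closed unbounded) subset of the ordinal `o`. -/
def Club (o : Ordinal.{u}) (C : Set Ordinal.{u}) : Prop :=
  C ⊆ Set.Iio o ∧ (∀ α < o, ∃ β ∈ C, α ≤ β) ∧
  (∀ α < o, (α ≠ 0 ∧ ∀ β < α, Order.succ β < α) → (∀ β < α, ∃ γ ∈ C, β ≤ γ ∧ γ < α) → α ∈ C)

/-- `S` is a stationary subset of the ordinal `o`. -/
def StationaryIn (o : Ordinal.{u}) (S : Set Ordinal.{u}) : Prop :=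
  S ⊆ Set.Iio o ∧ ∀ C : Set Ordinal.{u}, Club o C → (S ∩ C).Nonempty

/-!
In a weak `p`-ordering with `p` on top, the upper rays `(x, p]` are open neighbourhoods of `p`,
so their traces on `X` form a nested subfamily of `p` with empty intersection.

Conversely, for a nested family `F` the relation "some `P ∈ F` contains `y` but not `x`" is a
strict partial order on `X`. Put `p` on top of a linear extension of it: lower rays avoid `p`,
and an upper ray `(x, p]` contains a member of `F` missing `x` (one exists since `⋂ F = ∅`),
so all rays are open in `X_p`.
-/

section Nested

variable {X : Type u} {F : Set (Set X)}

theorem Antitone.nested_range {ι : Type v} [LinearOrder ι] {f : ι → Set X} (hf : Antitone f) :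
    Nested (range f) := by
  rintro _ ⟨i, rfl⟩ _ ⟨j, rfl⟩
  exact (le_total j i).imp (fun h => hf h) (fun h => hf h)

def nestedLT (F : Set (Set X)) (x y : X) : Prop :=
  ∃ P ∈ F, x ∉ P ∧ y ∈ P

theorem Nested.isStrictOrder_nestedLT (hF : Nested F) : IsStrictOrder X (nestedLT F) where
  irrefl _ := fun ⟨_, _, hx, hx'⟩ => hx hx'
  trans x y z := by
    rintro ⟨P, hP, hxP, hyP⟩ ⟨Q, hQ, hyQ, hzQ⟩
    rcases hF P hP Q hQ with hPQ | hQP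
    · exact absurd (hPQ hyP) hyQ
    · exact ⟨Q, hQ, fun hxQ => hxP (hQP hxQ), hzQ⟩

theorem Nested.exists_linearOrder (hF : Nested F) :
    ∃ r : LinearOrder X, ∀ P ∈ F, ∀ x ∉ P, ∀ y ∈ P, r.lt x y := by
  have := hF.isStrictOrder_nestedLT
  let _ := partialOrderOfSO (nestedLT F)
  refine ⟨(inferInstance : LinearOrder (LinearExtension X)), fun P hP x hx y hy => ?_⟩
  have hxy : x < y := lt_iff_le_and_ne.2 ⟨Or.inr ⟨P, hP, hx, hy⟩, fun h => hx (h ▸ hy)⟩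
  exact toLinearExtension.monotone.strictMono_of_injective Function.injective_id hxy

end Nested

theorem woBy_iff_forall_isOpen_rays {Z : Type u} (t : TopologicalSpace Z) (r : LinearOrder Z) :
    WOBy t r ↔ ∀ a, t.IsOpen {z | r.lt z a} ∧ t.IsOpen {z | r.lt a z} := by
  refine (TopologicalSpace.le_def.symm.trans
    TopologicalSpace.le_generateFrom_iff_subset_isOpen).trans ?_
  refine ⟨fun h a => ⟨h ⟨a, .inl rfl⟩, h ⟨a, .inr rfl⟩⟩, ?_⟩
  rintro h _ ⟨a, rfl | rfl⟩
  exacts [(h a).1, (h a).2]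

theorem woBy_filterTop_iff {X : Type u} (p : Filter X) (r : LinearOrder (Option X))
    (htop : ∀ z, r.le z none) :
    WOBy (filterTop p) r ↔ ∀ x : X, {y : X | r.lt (some x) (some y)} ∈ p := by
  let _ := r
  rw [woBy_iff_forall_isOpen_rays]
  refine ⟨fun h x => (h (some x)).2 ((htop _).lt_of_ne (Option.some_ne_none x)),
    fun h a => ⟨fun ha => absurd (ha : none < a) (htop a).not_gt, fun ha => ?_⟩⟩
  cases a with
  | none => exact absurd (ha : none < none) (lt_irrefl _)
  | some x => exact h x

theorem stmt0_general {X : Type u} (p : Filter X) :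
    WeaklyPOrderable (filterTop p) (none : Option X) ↔
      ∃ F : Set (Set X), (∀ P ∈ F, P ∈ p) ∧ Nested F ∧ ⋂₀ F = (∅ : Set X) := by
  constructor
  · rintro ⟨r, hwo, htop⟩
    let _ : LinearOrder X := LinearOrder.lift' some (Option.some_injective X)
    refine ⟨range Ioi, ?_, antitone_Ioi.nested_range, ?_⟩
    · rintro _ ⟨x, rfl⟩
      exact (woBy_filterTop_iff p r htop).1 hwo x
    · exact sInter_eq_empty_iff.2 fun x => ⟨Ioi x, mem_range_self x, lt_irrefl x⟩
  · rintro ⟨F, hFp, hF, hempty⟩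
    obtain ⟨r, hr⟩ := hF.exists_linearOrder
    let _ := r
    let o : LinearOrder (Option X) := inferInstanceAs (LinearOrder (WithTop X))
    have htop (z : WithTop X) : z ≤ ⊤ := le_top
    refine ⟨o, (woBy_filterTop_iff p o htop).2 fun x => ?_, htop⟩
    obtain ⟨P, hP, hxP⟩ := sInter_eq_empty_iff.1 hempty x
    exact Filter.mem_of_superset (hFp P hP) fun y hy => WithTop.coe_lt_coe.2 (hr P hP x hxP y hy)

/-- A filter space `X_p` is weakly `p`-orderable if and only if there exists a
nested subfamily `𝒫` of the filter `p` with `⋂ 𝒫 = ∅`. -/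
theorem stmt0 {X : Type u} [Infinite X] (p : Filter X) (hfree : IsFree p) :
    WeaklyPOrderable (filterTop p) (none : Option X) ↔
      ∃ F : Set (Set X), (∀ P ∈ F, P ∈ p) ∧ Nested F ∧ ⋂₀ F = (∅ : Set X) :=
  stmt0_general p
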